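/- arXiv:1609.00675 — 2 statements merged into one kernel-verified Lean document; each statement's English description precedes it below -/
import Mathlib

section
/- Let {aₙ}ₙ≥1 be a sequence of complex numbers whose empirical measures (1/n) Σ_{k=1}^n δ_{a_k} converge weakly to a probability measure μ on ℂ. Let σₙ be positive reals with σₙ ↓ 0, and let X₁, X₂, ... be i.i.d. complex random variables. Then almost surely, the empirical measures (1/n) Σ_{k=1}^n δ_{a_k + σ_k X_k} also converge weakly to μ. -/
open Filter MeasureTheory ProbabilityTheory Finset

/-- If the empirical measures of {aₙ} converge weakly to a probability measure μ on ℂ,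
    σₙ ↓ 0 are positive reals, and X₁, X₂, … are i.i.d. complex random variables, then
    almost surely the empirical measures of {aₙ + σₙ Xₙ} also converge weakly to μ. -/
theorem perturbed_empirical_measure_weak_limit
    {Ω : Type*} [MeasurableSpace Ω] (P : Measure Ω) [IsProbabilityMeasure P]
    (a : ℕ → ℂ) (μ : Measure ℂ) [IsProbabilityMeasure μ]
    (ha : ∀ f : ℂ → ℝ, ContDiff ℝ (⊤ : ℕ∞) f → HasCompactSupport f →
      Tendsto (fun n : ℕ => (1 / (n : ℝ)) * ∑ k ∈ Finset.range n, f (a k))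
        Filter.atTop (nhds (∫ w, f w ∂μ)))
    (σ : ℕ → ℝ) (hσpos : ∀ n, 0 < σ n) (hσanti : Antitone σ)
    (hσ0 : Tendsto σ Filter.atTop (nhds 0))
    (X : ℕ → Ω → ℂ) (hXmeas : ∀ n, Measurable (X n))
    (hXindep : iIndepFun X P)
    (hXident : ∀ n, IdentDistrib (X n) (X 0) P P) :
    ∀ᵐ ω ∂P, ∀ f : ℂ → ℝ, ContDiff ℝ (⊤ : ℕ∞) f → HasCompactSupport f →
      Tendsto (fun n : ℕ =>
          (1 / (n : ℝ)) * ∑ k ∈ Finset.range n, f (a k + (σ k : ℂ) * X k ω))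
        Filter.atTop (nhds (∫ w, f w ∂μ)) := by
  classical
  set Y : ℕ → ℕ → Ω → ℝ := fun M k ω => if (M : ℝ) < ‖X k ω‖ then 1 else 0 with hY
  have hgmeas : ∀ M : ℕ, Measurable (fun z : ℂ => if (M : ℝ) < ‖z‖ then (1:ℝ) else 0) := by
    intro M
    exact Measurable.ite (measurableSet_lt measurable_const measurable_norm)
      measurable_const measurable_const
  have hYmeas : ∀ M k, Measurable (Y M k) := fun M k => (hgmeas M).comp (hXmeas k)
  have hYint : ∀ M k, Integrable (Y M k) P := by
    intro M k
    refine ⟨(hYmeas M k).aestronglyMeasurable, ?_⟩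
    apply HasFiniteIntegral.of_bounded (C := 1)
    filter_upwards with ω
    by_cases h : (M : ℝ) < ‖X k ω‖
    · rw [hY]; simp only; rw [if_pos h]; norm_num
    · rw [hY]; simp only; rw [if_neg h]; norm_num
  have hYindep : ∀ M : ℕ, Pairwise (Function.onFun (IndepFun · · P) (Y M)) := by
    intro M i j hij
    exact (hXindep.indepFun hij).comp (hgmeas M) (hgmeas M)
  have hYident : ∀ (M : ℕ) i, IdentDistrib (Y M i) (Y M 0) P P :=
    fun M i => (hXident i).comp (hgmeas M)
  have hEY : ∀ M : ℕ, (∫ ω, Y M 0 ω ∂P) = (P {ω | (M : ℝ) < ‖X 0 ω‖}).toReal := by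
    intro M
    have hs : MeasurableSet {ω | (M : ℝ) < ‖X 0 ω‖} :=
      measurableSet_lt measurable_const (hXmeas 0).norm
    have hind : Y M 0 = Set.indicator {ω | (M : ℝ) < ‖X 0 ω‖} (fun _ => (1:ℝ)) := by
      funext ω; simp [hY, Set.indicator_apply, Set.mem_setOf_eq]
    rw [hind, integral_indicator_const (1:ℝ) hs]
    simp [Measure.real]
  have hslln : ∀ M : ℕ, ∀ᵐ ω ∂P, Tendsto (fun n : ℕ => (∑ k ∈ range n, Y M k ω) / n)
      atTop (nhds ((P {ω | (M : ℝ) < ‖X 0 ω‖}).toReal)) := by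
    intro M
    filter_upwards [strong_law_ae_real (Y M) (hYint M 0) (hYindep M) (hYident M)] with ω h
    rwa [hEY M] at h
  -- tail probability tends to zero
  have htail : Tendsto (fun M : ℕ => (P {ω | (M : ℝ) < ‖X 0 ω‖}).toReal) atTop (nhds 0) := by
    have hs : ∀ M : ℕ, NullMeasurableSet {ω | (M : ℝ) < ‖X 0 ω‖} P := fun M =>
      (measurableSet_lt measurable_const (hXmeas 0).norm).nullMeasurableSet
    have hanti : Antitone fun M : ℕ => {ω | (M : ℝ) < ‖X 0 ω‖} := by
      intro M N hMN ω hω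
      simp only [Set.mem_setOf_eq] at hω ⊢
      exact lt_of_le_of_lt (by exact_mod_cast hMN) hω
    have h0 : Tendsto (fun M : ℕ => P {ω | (M : ℝ) < ‖X 0 ω‖}) atTop
        (nhds (P (⋂ M : ℕ, {ω | (M : ℝ) < ‖X 0 ω‖}))) :=
      tendsto_measure_iInter_atTop hs hanti ⟨0, measure_ne_top _ _⟩
    have hempty : (⋂ M : ℕ, {ω | (M : ℝ) < ‖X 0 ω‖}) = (∅ : Set Ω) := by
      ext ω
      simp only [Set.mem_iInter, Set.mem_setOf_eq, Set.mem_empty_iff_false, iff_false, not_forall,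
        not_lt]
      obtain ⟨M, hM⟩ := exists_nat_gt ‖X 0 ω‖
      exact ⟨M, hM.le⟩
    rw [hempty, measure_empty] at h0
    have := (ENNReal.tendsto_toReal (by simp : (0:ENNReal) ≠ ⊤)).comp h0
    exact this
  have hae : ∀ᵐ ω ∂P, ∀ M : ℕ, Tendsto (fun n : ℕ => (∑ k ∈ range n, Y M k ω) / n)
      atTop (nhds ((P {ω | (M : ℝ) < ‖X 0 ω‖}).toReal)) := by
    rw [ae_all_iff]; exact hslln
  filter_upwards [hae] with ω hω
  intro f hf hfc
  obtain ⟨C, hC⟩ := hfc.exists_bound_of_continuous hf.continuous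
  have hC0 : 0 ≤ C := le_trans (norm_nonneg _) (hC 0)
  obtain ⟨L, hL⟩ := ContDiff.lipschitzWith_of_hasCompactSupport hfc hf (by simp)
  -- the difference tends to 0
  have hdiff : Tendsto (fun n : ℕ =>
      (1 / (n : ℝ)) * ∑ k ∈ range n, (f (a k + (σ k : ℂ) * X k ω) - f (a k)))
      atTop (nhds 0) := by
    rw [NormedAddCommGroup.tendsto_nhds_zero]
    intro ε hε
    set ε' : ℝ := ε / (4 * C + 1) with hε'def
    have hε'pos : 0 < ε' := div_pos hε (by linarith)
    obtain ⟨M, hM⟩ := (htail.eventually_lt_const hε'pos).exists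
    set t : ℝ := (P {ω' | (M : ℝ) < ‖X 0 ω'‖}).toReal with ht
    have ht0 : 0 ≤ t := ENNReal.toReal_nonneg
    have hA : Tendsto (fun n : ℕ => (∑ k ∈ range n, Y M k ω) / n) atTop (nhds t) := hω M
    have hB : Tendsto (fun n : ℕ => ((n : ℝ)⁻¹) * ∑ k ∈ range n, σ k) atTop (nhds 0) :=
      hσ0.cesaro
    have hBound : Tendsto (fun n : ℕ =>
        2 * C * ((∑ k ∈ range n, Y M k ω) / n)
          + (L * M) * (((n : ℝ)⁻¹) * ∑ k ∈ range n, σ k)) atTop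
        (nhds (2 * C * t + (L * M) * 0)) :=
      (hA.const_mul (2 * C)).add (hB.const_mul ((L : ℝ) * M))
    have hlim_lt : 2 * C * t + (L * M) * 0 < ε := by
      have h1 : 2 * C * t ≤ 2 * C * ε' := by nlinarith
      have h2 : 2 * C * ε' < ε := by
        have hpos : (0:ℝ) < 4 * C + 1 := by linarith
        calc 2 * C * ε' = 2 * C * ε / (4 * C + 1) := by rw [hε'def]; ring
          _ < ε := by rw [div_lt_iff₀ hpos]; nlinarith
      linarith
    filter_upwards [hBound.eventually_lt_const hlim_lt] with n hn
    -- pointwise bound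
    have hterm : ∀ k, |f (a k + (σ k : ℂ) * X k ω) - f (a k)|
        ≤ 2 * C * Y M k ω + (L * M) * σ k := by
      intro k
      by_cases h : (M : ℝ) < ‖X k ω‖
      · have hY1 : Y M k ω = 1 := if_pos h
        have := abs_sub (f (a k + (σ k : ℂ) * X k ω)) (f (a k))
        have h1 : |f (a k + (σ k : ℂ) * X k ω)| ≤ C := by
          simpa [Real.norm_eq_abs] using hC (a k + (σ k : ℂ) * X k ω)
        have h2 : |f (a k)| ≤ C := by simpa [Real.norm_eq_abs] using hC (a k)
        have h3 : (0:ℝ) ≤ (L * M) * σ k :=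
          mul_nonneg (mul_nonneg L.coe_nonneg (Nat.cast_nonneg M)) (hσpos k).le
        rw [hY1]
        calc |f (a k + (σ k : ℂ) * X k ω) - f (a k)|
            ≤ |f (a k + (σ k : ℂ) * X k ω)| + |f (a k)| := abs_sub _ _
          _ ≤ 2 * C * 1 + (L * M) * σ k := by linarith
      · have hY0 : Y M k ω = 0 := if_neg h
        push_neg at h
        have hd : dist (f (a k + (σ k : ℂ) * X k ω)) (f (a k))
            ≤ L * dist (a k + (σ k : ℂ) * X k ω) (a k) := hL.dist_le_mul _ _
        have hdist : dist (a k + (σ k : ℂ) * X k ω) (a k) = σ k * ‖X k ω‖ := by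
          rw [dist_eq_norm]
          have : a k + (σ k : ℂ) * X k ω - a k = (σ k : ℂ) * X k ω := by ring
          rw [this, norm_mul, Complex.norm_real, Real.norm_eq_abs,
            abs_of_pos (hσpos k)]
        rw [Real.dist_eq, hdist] at hd
        have : (L : ℝ) * (σ k * ‖X k ω‖) ≤ (L * M) * σ k := by
          have := mul_le_mul_of_nonneg_left h (mul_nonneg L.coe_nonneg (hσpos k).le)
          nlinarith [L.coe_nonneg, (hσpos k).le]
        rw [hY0]
        linarith
    have hn1 : (0:ℝ) ≤ 1 / (n : ℝ) := by positivity
    calc ‖(1 / (n : ℝ)) * ∑ k ∈ range n, (f (a k + (σ k : ℂ) * X k ω) - f (a k))‖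
        = (1 / (n : ℝ)) * |∑ k ∈ range n, (f (a k + (σ k : ℂ) * X k ω) - f (a k))| := by
          rw [Real.norm_eq_abs, abs_mul, abs_of_nonneg hn1]
      _ ≤ (1 / (n : ℝ)) * ∑ k ∈ range n, |f (a k + (σ k : ℂ) * X k ω) - f (a k)| :=
          mul_le_mul_of_nonneg_left (Finset.abs_sum_le_sum_abs _ _) hn1
      _ ≤ (1 / (n : ℝ)) * ∑ k ∈ range n, (2 * C * Y M k ω + (L * M) * σ k) :=
          mul_le_mul_of_nonneg_left (Finset.sum_le_sum fun k _ => hterm k) hn1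
      _ = 2 * C * ((∑ k ∈ range n, Y M k ω) / n)
          + (L * M) * (((n : ℝ)⁻¹) * ∑ k ∈ range n, σ k) := by
          rw [Finset.sum_add_distrib, ← Finset.mul_sum, ← Finset.mul_sum]
          ring
      _ < ε := hn
  have hfin := (ha f hf hfc).add hdiff
  rw [add_zero] at hfin
  have heq : (fun n : ℕ => (1 / (n : ℝ)) * ∑ k ∈ Finset.range n, f (a k + (σ k : ℂ) * X k ω))
      = fun n : ℕ => (1 / (n : ℝ)) * ∑ k ∈ Finset.range n, f (a k)
        + (1 / (n : ℝ)) * ∑ k ∈ range n, (f (a k + (σ k : ℂ) * X k ω) - f (a k)) := by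
    funext n
    rw [← mul_add, ← Finset.sum_add_distrib]
    congr 1
    exact Finset.sum_congr rfl fun k _ => by ring
  rw [heq]
  exact hfin
end

section
/- Let {aₖ} and {bₖ} be sequences of complex numbers whose empirical measures converge weakly to probability measures μ and ν respectively. Let {ξₖ} be a sequence of independent random variables where ξₖ = aₖ with probability p and ξₖ = bₖ with probability 1−p. Then almost surely, the empirical measures μₙ = (1/n) Σ_{k=1}^n δ_{ξ_k} converge weakly to λ = pμ + (1−p)ν. -/
open Filter MeasureTheory ProbabilityTheory Finset

/-- Deterministic interpolation: convergence along squares plus bounded increments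
gives full Cesàro convergence. -/
lemma interp_sqrt (S : ℕ → ℝ) (C : ℝ) (hC0 : 0 ≤ C)
    (hstep : ∀ n, |S (n + 1) - S n| ≤ C)
    (h : Tendsto (fun n : ℕ => S (n ^ 2) / ((n : ℝ) ^ 2)) atTop (nhds 0)) :
    Tendsto (fun n : ℕ => S n / (n : ℝ)) atTop (nhds 0) := by
  have hdiff : ∀ a d : ℕ, |S (a + d) - S a| ≤ d * C := by
    intro a d
    induction d with
    | zero => simp
    | succ d ih =>
      have h1 : |S (a + (d+1)) - S a| ≤ |S (a + d + 1) - S (a + d)| + |S (a + d) - S a| := by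
        have : S (a + (d+1)) - S a = (S (a + d + 1) - S (a + d)) + (S (a + d) - S a) := by
          have : a + (d + 1) = a + d + 1 := by omega
          rw [this]; ring
        rw [this]; exact abs_add_le _ _
      calc |S (a + (d+1)) - S a| ≤ |S (a + d + 1) - S (a + d)| + |S (a + d) - S a| := h1
        _ ≤ C + d * C := add_le_add (hstep _) ih
        _ = (d + 1 : ℕ) * C := by push_cast; ring
  have hsqrt : Tendsto Nat.sqrt atTop atTop := by
    apply Filter.tendsto_atTop_atTop.2
    intro b
    exact ⟨b * b, fun n hn => by
      have := Nat.sqrt_le_sqrt hn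
      rwa [Nat.sqrt_eq b] at this⟩
  have habs : Tendsto (fun n : ℕ => |S (n ^ 2)| / ((n : ℝ) ^ 2)) atTop (nhds 0) := by
    have := h.abs
    rw [abs_zero] at this
    convert this using 2 with n
    rw [abs_div, abs_of_nonneg (by positivity : (0:ℝ) ≤ (n : ℝ) ^ 2)]
  have h1 : Tendsto (fun m : ℕ => |S (Nat.sqrt m ^ 2)| / ((Nat.sqrt m : ℝ) ^ 2)) atTop (nhds 0) :=
    habs.comp hsqrt
  have h2 : Tendsto (fun m : ℕ => 2 * C / (Nat.sqrt m : ℝ)) atTop (nhds 0) :=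
    (tendsto_const_div_atTop_nhds_zero_nat (2 * C)).comp hsqrt
  have hg : Tendsto (fun m : ℕ =>
      |S (Nat.sqrt m ^ 2)| / ((Nat.sqrt m : ℝ) ^ 2) + 2 * C / (Nat.sqrt m : ℝ)) atTop (nhds 0) := by
    have := h1.add h2; simpa using this
  rw [tendsto_zero_iff_abs_tendsto_zero]
  apply squeeze_zero' (Filter.Eventually.of_forall fun m => abs_nonneg _) _ hg
  filter_upwards [Filter.eventually_ge_atTop 1] with m hm
  set n := Nat.sqrt m with hn
  have hn1 : 1 ≤ n := by
    have := Nat.sqrt_le_sqrt hm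
    simpa [hn] using this
  have hle : n ^ 2 ≤ m := Nat.sqrt_le' m
  have hub : m ≤ n ^ 2 + 2 * n := by
    have := Nat.lt_succ_sqrt' m
    nlinarith [Nat.lt_succ_sqrt' m]
  -- |S m| ≤ |S (n^2)| + 2n C
  have key : |S m| ≤ |S (n ^ 2)| + (2 * n : ℝ) * C := by
    have hd := hdiff (n ^ 2) (m - n ^ 2)
    rw [Nat.add_sub_cancel' hle] at hd
    have : |S m| ≤ |S m - S (n ^ 2)| + |S (n ^ 2)| := by
      have := abs_add_le (S m - S (n ^ 2)) (S (n ^ 2)); simpa using this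
    have hdle : ((m - n ^ 2 : ℕ) : ℝ) * C ≤ (2 * n : ℝ) * C := by
      apply mul_le_mul_of_nonneg_right _ hC0
      have : m - n ^ 2 ≤ 2 * n := by omega
      exact_mod_cast this
    linarith
  have hmpos : (0:ℝ) < m := by exact_mod_cast hm
  have hnpos : (0:ℝ) < (n:ℝ) := by exact_mod_cast hn1
  have hn2m : ((n:ℝ) ^ 2) ≤ (m:ℝ) := by exact_mod_cast hle
  rw [abs_div, abs_of_nonneg hmpos.le]
  have hn2pos : (0:ℝ) < (n:ℝ) ^ 2 := by positivity
  set A := |S (n ^ 2)| with hA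
  have hA0 : 0 ≤ A := abs_nonneg _
  have e1 : A / (n:ℝ) ^ 2 * ((n:ℝ) ^ 2) = A := div_mul_cancel₀ _ hn2pos.ne'
  have e2 : 2 * C / (n:ℝ) * (n:ℝ) = 2 * C := div_mul_cancel₀ _ hnpos.ne'
  have hu : 0 ≤ A / (n:ℝ) ^ 2 := by positivity
  have hv : 0 ≤ 2 * C / (n:ℝ) := by positivity
  rw [div_le_iff₀ hmpos]
  nlinarith [mul_nonneg hu (sub_nonneg.2 hn2m), mul_nonneg hv (sub_nonneg.2 hn2m),
    mul_le_mul_of_nonneg_left hn2m hv, sq_nonneg ((n:ℝ))]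

lemma slln_bounded {Ω : Type*} [MeasurableSpace Ω] (P : Measure Ω) [IsProbabilityMeasure P]
    (X : ℕ → Ω → ℝ) (hmeas : ∀ k, Measurable (X k))
    (hindep : iIndepFun X P)
    (C : ℝ) (hC : ∀ k ω, |X k ω| ≤ C) (hmean : ∀ k, ∫ ω, X k ω ∂P = 0) :
    ∀ᵐ ω ∂P, Tendsto (fun n : ℕ => (1 / (n : ℝ)) * ∑ k ∈ Finset.range n, X k ω)
      atTop (nhds 0) := by
  have hΩ : Nonempty Ω := by
    by_contra h
    rw [not_nonempty_iff] at h
    have h1 := measure_univ (μ := P)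
    rw [Set.univ_eq_empty_iff.2 h, measure_empty] at h1
    exact zero_ne_one h1
  have hC0 : 0 ≤ C := le_trans (abs_nonneg _) (hC 0 (Classical.arbitrary Ω))
  -- ℒ² bounds
  have hL2 : ∀ k, MemLp (X k) 2 P := fun k =>
    MemLp.of_bound (hmeas k).aestronglyMeasurable C
      (Filter.Eventually.of_forall fun ω => by rw [Real.norm_eq_abs]; exact hC k ω)
  -- sums
  set S : ℕ → Ω → ℝ := fun n ω => ∑ k ∈ Finset.range n, X k ω with hS
  have hSL2 : ∀ n, MemLp (S n) 2 P := fun n => by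
    have h0 := memLp_finset_sum' (Finset.range n) (fun i (_ : i ∈ Finset.range n) => hL2 i)
    have : S n = ∑ i ∈ Finset.range n, X i := by ext ω; simp [hS]
    rw [this]; exact h0
  have hvar : ∀ k, variance (X k) P ≤ C ^ 2 := by
    intro k
    refine le_trans (variance_le_expectation_sq (hL2 k).aestronglyMeasurable) ?_
    calc ∫ ω, (X k ω) ^ 2 ∂P ≤ ∫ _, C ^ 2 ∂P := by
          apply integral_mono ((hL2 k).integrable_sq) (integrable_const _)
          intro ω
          have := hC k ω
          simp only []
          nlinarith [abs_nonneg (X k ω), neg_abs_le (X k ω), le_abs_self (X k ω), sq_abs (X k ω)]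
      _ = C ^ 2 := by simp
  have hvarS : ∀ n, variance (S n) P ≤ n * C ^ 2 := by
    intro n
    have hpair : Set.Pairwise ↑(Finset.range n) fun i j => IndepFun (X i) (X j) P :=
      fun i _ j _ hij => hindep.indepFun hij
    have := IndepFun.variance_sum (μ := P) (fun i (_ : i ∈ Finset.range n) => hL2 i) hpair
    have h2 : variance (S n) P = ∑ i ∈ Finset.range n, variance (X i) P := by
      rw [hS]; convert this using 2; ext ω; simp
    rw [h2]
    calc ∑ i ∈ Finset.range n, variance (X i) P ≤ ∑ _i ∈ Finset.range n, C ^ 2 :=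
          Finset.sum_le_sum fun i _ => hvar i
      _ = n * C ^ 2 := by simp [mul_comm]
  have hmeanS : ∀ n, ∫ ω, S n ω ∂P = 0 := by
    intro n
    rw [hS]
    rw [integral_finset_sum _ (fun i _ => (hL2 i).integrable (by norm_num))]
    simp [hmean]

  -- a.s. convergence along the squares
  have key : ∀ᵐ ω ∂P, Tendsto (fun n : ℕ => S (n ^ 2) ω / ((n : ℝ) ^ 2)) atTop (nhds 0) := by
    have hsub : ∀ j : ℕ, ∀ᵐ ω ∂P, ∀ᶠ n in atTop,
        |S (n ^ 2) ω| < (1 / (j + 1 : ℝ)) * ((n : ℝ) ^ 2) := by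
      intro j
      have hε : (0:ℝ) < 1 / (j + 1 : ℝ) := by positivity
      set ε := 1 / (j + 1 : ℝ) with hεdef
      set A : ℕ → Set Ω := fun n => {ω | ε * ((n + 1 : ℕ) : ℝ) ^ 2 ≤ |S ((n + 1) ^ 2) ω|} with hAdef
      have hA : ∀ n, P (A n) ≤ ENNReal.ofReal (C ^ 2 / ε ^ 2 * (1 / ((n + 1 : ℕ) : ℝ) ^ 2)) := by
        intro n
        have hcpos : (0:ℝ) < ε * ((n + 1 : ℕ) : ℝ) ^ 2 := by positivity
        have hch := meas_ge_le_variance_div_sq (μ := P) (hSL2 ((n + 1) ^ 2)) hcpos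
        have hEeq : (∫ ω, S ((n + 1) ^ 2) ω ∂P) = 0 := hmeanS _
        have hset : A n = {ω | ε * ((n + 1 : ℕ) : ℝ) ^ 2 ≤ |S ((n + 1) ^ 2) ω - P[S ((n + 1) ^ 2)]|} := by
          rw [hAdef]
          have : P[S ((n + 1) ^ 2)] = 0 := hEeq
          simp [this]
        rw [hset]
        refine hch.trans (ENNReal.ofReal_le_ofReal ?_)
        have hvb := hvarS ((n + 1) ^ 2)
        have hnn : (0:ℝ) < ((n + 1 : ℕ) : ℝ) := by positivity
        rw [div_le_iff₀ (by positivity), mul_pow]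
        calc variance (S ((n + 1) ^ 2)) P ≤ (((n + 1) ^ 2 : ℕ) : ℝ) * C ^ 2 := hvb
          _ = C ^ 2 / ε ^ 2 * (1 / ((n + 1 : ℕ) : ℝ) ^ 2) * (ε ^ 2 * (((n + 1 : ℕ) : ℝ) ^ 2) ^ 2) := by
              push_cast
              field_simp
      have hsummable : Summable (fun n : ℕ => C ^ 2 / ε ^ 2 * (1 / ((n + 1 : ℕ) : ℝ) ^ 2)) := by
        apply Summable.mul_left
        have h2 : Summable (fun n : ℕ => 1 / ((n : ℝ)) ^ 2) :=
          Real.summable_one_div_nat_pow.2 one_lt_two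
        have := (summable_nat_add_iff 1).2 h2
        convert this using 2 with n
      have hsum : (∑' n, P (A n)) ≠ ⊤ := by
        refine ne_top_of_le_ne_top ?_ (ENNReal.tsum_le_tsum hA)
        rw [← ENNReal.ofReal_tsum_of_nonneg (fun n => by positivity) hsummable]
        exact ENNReal.ofReal_ne_top
      filter_upwards [MeasureTheory.ae_eventually_notMem hsum] with ω hω
      rw [Filter.eventually_atTop] at hω ⊢
      obtain ⟨N, hN⟩ := hω
      refine ⟨N + 1, fun m hm => ?_⟩
      have h1 : m - 1 ≥ N := by omega
      have h2 := hN (m - 1) h1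
      rw [hAdef] at h2
      simp only [Set.mem_setOf_eq, not_le] at h2
      have hm1 : m - 1 + 1 = m := by omega
      rw [hm1] at h2
      rw [hεdef]
      convert h2 using 3
    rw [← MeasureTheory.ae_all_iff] at hsub
    filter_upwards [hsub] with ω hω
    rw [Metric.tendsto_atTop]
    intro ε hε
    obtain ⟨j, hj⟩ := exists_nat_one_div_lt hε
    have hev := hω j
    rw [Filter.eventually_atTop] at hev
    obtain ⟨N, hN⟩ := hev
    refine ⟨max N 1, fun n hn => ?_⟩
    have hn1 : 1 ≤ n := le_trans (le_max_right _ _) hn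
    have hnN : N ≤ n := le_trans (le_max_left _ _) hn
    have h2 := hN n hnN
    have hnpos : (0:ℝ) < ((n:ℝ)) ^ 2 := by
      have : (0:ℝ) < (n:ℝ) := by exact_mod_cast hn1
      positivity
    rw [Real.dist_eq, sub_zero, abs_div, abs_of_nonneg hnpos.le, div_lt_iff₀ hnpos]
    calc |S (n ^ 2) ω| < 1 / (j + 1 : ℝ) * (n:ℝ) ^ 2 := h2
      _ ≤ ε * (n:ℝ) ^ 2 := by nlinarith
  filter_upwards [key] with ω hω
  have := interp_sqrt (fun n => S n ω) C hC0 (fun n => by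
    have : S (n + 1) ω - S n ω = X n ω := by
      rw [hS]; simp [Finset.sum_range_succ]
    rw [this]; exact hC n ω) hω
  convert this using 2 with n
  rw [hS]
  rw [one_div, inv_mul_eq_div]

/-- A.s. convergence of the mixture empirical averages for a single bounded continuous test
function. -/
lemma per_function {Ω : Type*} [MeasurableSpace Ω] (P : Measure Ω) [IsProbabilityMeasure P]
    (a b : ℕ → ℂ) (p : ℝ) (hp0 : 0 ≤ p) (hp1 : p ≤ 1)
    (ξ : ℕ → Ω → ℂ) (hξmeas : ∀ k, Measurable (ξ k))
    (hξindep : iIndepFun ξ P)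
    (hξdist : ∀ k, Measure.map (ξ k) P =
      ENNReal.ofReal p • Measure.dirac (a k) + ENNReal.ofReal (1 - p) • Measure.dirac (b k))
    (g : ℂ → ℝ) (hg : Continuous g) (C : ℝ) (hgC : ∀ x, |g x| ≤ C)
    (La Lb : ℝ)
    (hA : Tendsto (fun n : ℕ => (1 / (n : ℝ)) * ∑ k ∈ Finset.range n, g (a k)) atTop (nhds La))
    (hB : Tendsto (fun n : ℕ => (1 / (n : ℝ)) * ∑ k ∈ Finset.range n, g (b k)) atTop (nhds Lb)) :
    ∀ᵐ ω ∂P, Tendsto (fun n : ℕ => (1 / (n : ℝ)) * ∑ k ∈ Finset.range n, g (ξ k ω))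
      atTop (nhds (p * La + (1 - p) * Lb)) := by
  have hp1' : (0:ℝ) ≤ 1 - p := by linarith
  set m : ℕ → ℝ := fun k => p * g (a k) + (1 - p) * g (b k) with hm
  have hmean : ∀ k, ∫ ω, g (ξ k ω) ∂P = m k := by
    intro k
    have h1 : ∫ ω, g (ξ k ω) ∂P = ∫ x, g x ∂(Measure.map (ξ k) P) :=
      (integral_map (hξmeas k).aemeasurable hg.aestronglyMeasurable).symm
    rw [h1, hξdist k]
    have hdint : ∀ z : ℂ, Integrable g (Measure.dirac z) := by
      intro z
      rw [← memLp_one_iff_integrable]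
      exact MemLp.of_bound hg.aestronglyMeasurable C
        (Filter.Eventually.of_forall fun x => by rw [Real.norm_eq_abs]; exact hgC x)
    have int1 : Integrable g (ENNReal.ofReal p • Measure.dirac (a k)) :=
      (hdint (a k)).smul_measure ENNReal.ofReal_ne_top
    have int2 : Integrable g (ENNReal.ofReal (1 - p) • Measure.dirac (b k)) :=
      (hdint (b k)).smul_measure ENNReal.ofReal_ne_top
    rw [integral_add_measure int1 int2, integral_smul_measure, integral_smul_measure,
      integral_dirac, integral_dirac, ENNReal.toReal_ofReal hp0, ENNReal.toReal_ofReal hp1']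
    simp [hm, smul_eq_mul]
  set X : ℕ → Ω → ℝ := fun k ω => g (ξ k ω) - m k with hX
  have hXmeas : ∀ k, Measurable (X k) := fun k =>
    ((hg.measurable.comp (hξmeas k)).sub measurable_const)
  have hXindep : iIndepFun X P :=
    hξindep.comp (fun k x => g x - m k) (fun k => hg.measurable.sub measurable_const)
  have hC0 : 0 ≤ C := le_trans (abs_nonneg _) (hgC 0)
  have hmC : ∀ k, |m k| ≤ C := by
    intro k
    rw [hm]
    calc |p * g (a k) + (1 - p) * g (b k)| ≤ |p * g (a k)| + |(1 - p) * g (b k)| := abs_add_le _ _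
      _ = p * |g (a k)| + (1 - p) * |g (b k)| := by
          rw [abs_mul, abs_mul, abs_of_nonneg hp0, abs_of_nonneg hp1']
      _ ≤ p * C + (1 - p) * C :=
          add_le_add (mul_le_mul_of_nonneg_left (hgC _) hp0)
            (mul_le_mul_of_nonneg_left (hgC _) hp1')
      _ = C := by ring
  have hXC : ∀ k ω, |X k ω| ≤ 2 * C := by
    intro k ω
    rw [hX]
    calc |g (ξ k ω) - m k| ≤ |g (ξ k ω)| + |m k| := abs_sub _ _
      _ ≤ C + C := add_le_add (hgC _) (hmC k)
      _ = 2 * C := by ring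
  have hgint : ∀ k, Integrable (fun ω => g (ξ k ω)) P := by
    intro k
    rw [← memLp_one_iff_integrable]
    exact MemLp.of_bound ((hg.measurable.comp (hξmeas k)).aestronglyMeasurable) C
      (Filter.Eventually.of_forall fun ω => by rw [Real.norm_eq_abs]; exact hgC _)
  have hXmean : ∀ k, ∫ ω, X k ω ∂P = 0 := by
    intro k
    rw [hX]
    simp only []
    rw [integral_sub (hgint k) (integrable_const _), hmean k, integral_const]
    simp
  have hzero := slln_bounded P X hXmeas hXindep (2 * C) hXC hXmean
  filter_upwards [hzero] with ω hω
  have hlim := hω.add ((hA.const_mul p).add (hB.const_mul (1 - p)))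
  rw [zero_add] at hlim
  apply hlim.congr
  intro n
  rw [hX, hm]
  simp only []
  rw [Finset.sum_sub_distrib, Finset.sum_add_distrib]
  rw [← Finset.mul_sum, ← Finset.mul_sum]
  ring


/-- A countable family of smooth compactly supported functions approximating all smooth
compactly supported functions in sup norm. -/
lemma exists_countable_dense_smooth_family :
    ∃ D : Set C(ℂ, ℝ), D.Countable ∧
      (∀ g ∈ D, ContDiff ℝ (⊤ : ℕ∞) ⇑g ∧ HasCompactSupport ⇑g) ∧
      (∀ f : ℂ → ℝ, ContDiff ℝ (⊤ : ℕ∞) f → HasCompactSupport f → ∀ ε : ℝ, 0 < ε →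
        ∃ g ∈ D, ∀ x, |f x - g x| ≤ ε) := by
  classical
  -- stratify by support radius
  set S : ℕ → Set C(ℂ, ℝ) := fun R =>
    {h | ContDiff ℝ (⊤ : ℕ∞) ⇑h ∧ tsupport ⇑h ⊆ Metric.closedBall 0 (R : ℝ)} with hSdef
  have hsep : ∀ R : ℕ, ∃ u : Set ↥(S R), u.Countable ∧ Dense u := fun R =>
    TopologicalSpace.exists_countable_dense _
  choose u hucount hudense using hsep
  set D : Set C(ℂ, ℝ) := ⋃ R : ℕ, (Subtype.val '' u R) with hDdef
  refine ⟨D, ?_, ?_, ?_⟩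
  · exact Set.countable_iUnion fun R => (hucount R).image _
  · rintro g hg
    rw [hDdef] at hg
    obtain ⟨R, hR⟩ := Set.mem_iUnion.1 hg
    obtain ⟨⟨g', hg'⟩, _, rfl⟩ := hR
    exact ⟨hg'.1, HasCompactSupport.of_support_subset_isCompact
      (isCompact_closedBall 0 R) (subset_trans subset_closure hg'.2)⟩
  · intro f hf hfc ε hε
    have hfcont : Continuous f := hf.continuous
    set fc : C(ℂ, ℝ) := ⟨f, hfcont⟩ with hfc'
    -- find a radius
    obtain ⟨r, hr⟩ := (hfc.isBounded).subset_closedBall 0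
    set R : ℕ := ⌈r⌉₊ with hR
    have hrR : Metric.closedBall (0:ℂ) r ⊆ Metric.closedBall 0 (R:ℝ) :=
      Metric.closedBall_subset_closedBall (Nat.le_ceil r)
    have hfmem : fc ∈ S R := ⟨hf, subset_trans hr hrR⟩
    -- density
    have hclos : fc ∈ closure (Subtype.val '' u R) := by
      have := hudense R ⟨fc, hfmem⟩
      rwa [closure_subtype] at this
    rw [mem_closure_iff_nhds] at hclos
    have hN : {h : C(ℂ, ℝ) | ∀ x ∈ Metric.closedBall (0:ℂ) (R:ℝ), dist (fc x) (h x) < ε}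
        ∈ nhds fc := by
      have hbasis := nhds_basis_uniformity'
        (ContinuousMap.hasBasis_compactConvergenceUniformity (α := ℂ) (β := ℝ)) (x := fc)
      apply hbasis.mem_of_mem (i := (Metric.closedBall (0:ℂ) (R:ℝ), {p : ℝ × ℝ | dist p.1 p.2 < ε}))
      exact ⟨isCompact_closedBall 0 _, Metric.dist_mem_uniformity hε⟩
    obtain ⟨g, hgN, hgD⟩ := hclos _ hN
    refine ⟨g, Set.mem_iUnion.2 ⟨R, hgD⟩, ?_⟩
    intro x
    by_cases hx : x ∈ Metric.closedBall (0:ℂ) (R:ℝ)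
    · have := hgN x hx
      rw [Real.dist_eq] at this
      exact le_of_lt this
    · have hfx : f x = 0 := by
        apply image_eq_zero_of_notMem_tsupport
        intro hmem
        exact hx (hfmem.2 hmem)
      obtain ⟨R', hR'⟩ := Set.mem_iUnion.1 (Set.mem_iUnion.2 ⟨R, hgD⟩ : g ∈ D)
      obtain ⟨⟨g', hg'⟩, _, rfl⟩ := hgD
      have hgx : g' x = 0 := by
        apply image_eq_zero_of_notMem_tsupport
        intro hmem
        exact hx (hg'.2 hmem)
      simp only [hfx]
      rw [show (⟨g', hg'⟩ : ↥(S R)).val x = g' x from rfl, hgx]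
      simpa using hε.le

/-- If the empirical measures of {aₖ} and {bₖ} converge weakly to μ and ν respectively,
    and ξₖ are independent random variables with ξₖ = aₖ with probability p and
    ξₖ = bₖ with probability 1 − p, then almost surely the empirical measures of {ξₖ}
    converge weakly to λ = pμ + (1−p)ν. -/
theorem random_mixture_empirical_measure_weak_limit
    {Ω : Type*} [MeasurableSpace Ω] (P : Measure Ω) [IsProbabilityMeasure P]
    (a b : ℕ → ℂ) (μ ν : Measure ℂ) [IsProbabilityMeasure μ] [IsProbabilityMeasure ν]
    (ha : ∀ f : ℂ → ℝ, ContDiff ℝ (⊤ : ℕ∞) f → HasCompactSupport f →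
      Tendsto (fun n : ℕ => (1 / (n : ℝ)) * ∑ k ∈ Finset.range n, f (a k))
        Filter.atTop (nhds (∫ w, f w ∂μ)))
    (hb : ∀ f : ℂ → ℝ, ContDiff ℝ (⊤ : ℕ∞) f → HasCompactSupport f →
      Tendsto (fun n : ℕ => (1 / (n : ℝ)) * ∑ k ∈ Finset.range n, f (b k))
        Filter.atTop (nhds (∫ w, f w ∂ν)))
    (p : ℝ) (hp0 : 0 ≤ p) (hp1 : p ≤ 1)
    (ξ : ℕ → Ω → ℂ) (hξmeas : ∀ k, Measurable (ξ k))
    (hξindep : iIndepFun ξ P)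
    (hξdist : ∀ k, Measure.map (ξ k) P =
      ENNReal.ofReal p • Measure.dirac (a k) + ENNReal.ofReal (1 - p) • Measure.dirac (b k)) :
    ∀ᵐ ω ∂P, ∀ f : ℂ → ℝ, ContDiff ℝ (⊤ : ℕ∞) f → HasCompactSupport f →
      Tendsto (fun n : ℕ => (1 / (n : ℝ)) * ∑ k ∈ Finset.range n, f (ξ k ω))
        Filter.atTop (nhds (p * ∫ w, f w ∂μ + (1 - p) * ∫ w, f w ∂ν)) := by
  obtain ⟨D, hDcount, hDprop, hDapprox⟩ := exists_countable_dense_smooth_family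
  have hae : ∀ᵐ ω ∂P, ∀ g ∈ D,
      Tendsto (fun n : ℕ => (1 / (n : ℝ)) * ∑ k ∈ Finset.range n, g (ξ k ω)) atTop
        (nhds (p * ∫ w, g w ∂μ + (1 - p) * ∫ w, g w ∂ν)) := by
    rw [MeasureTheory.ae_ball_iff hDcount]
    intro g hg
    obtain ⟨hgs, hgc⟩ := hDprop g hg
    obtain ⟨C, hC⟩ := hgc.exists_bound_of_continuous g.continuous
    exact per_function P a b p hp0 hp1 ξ hξmeas hξindep hξdist g g.continuous C
      (fun x => by rw [← Real.norm_eq_abs]; exact hC x) _ _ (ha g hgs hgc) (hb g hgs hgc)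
  filter_upwards [hae] with ω hω
  intro f hf hfc
  rw [Metric.tendsto_atTop]
  intro ε hε
  obtain ⟨g, hgD, hgf⟩ := hDapprox f hf hfc (ε / 4) (by linarith)
  have hgtend := hω g hgD
  rw [Metric.tendsto_atTop] at hgtend
  obtain ⟨N, hN⟩ := hgtend (ε / 4) (by linarith)
  -- integral comparison
  have hfbdd := hfc.exists_bound_of_continuous hf.continuous
  obtain ⟨Cf, hCf⟩ := hfbdd
  obtain ⟨Cg, hCg⟩ := (hDprop g hgD).2.exists_bound_of_continuous g.continuous
  have hint : ∀ (m : Measure ℂ), IsProbabilityMeasure m →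
      |(∫ w, f w ∂m) - ∫ w, g w ∂m| ≤ ε / 4 := by
    intro m hm
    have hfint : Integrable f m := by
      rw [← memLp_one_iff_integrable]
      exact MemLp.of_bound hf.continuous.aestronglyMeasurable Cf
        (Filter.Eventually.of_forall hCf)
    have hgint : Integrable (⇑g) m := by
      rw [← memLp_one_iff_integrable]
      exact MemLp.of_bound g.continuous.aestronglyMeasurable Cg
        (Filter.Eventually.of_forall hCg)
    rw [← integral_sub hfint hgint, ← Real.norm_eq_abs]
    calc ‖∫ w, (f w - g w) ∂m‖ ≤ (ε / 4) * (m Set.univ).toReal :=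
          norm_integral_le_of_norm_le_const
            (Filter.Eventually.of_forall fun x => by rw [Real.norm_eq_abs]; exact hgf x)
      _ = ε / 4 := by rw [hm.measure_univ]; simp
  have hd3 : |(p * ∫ w, g w ∂μ + (1 - p) * ∫ w, g w ∂ν) -
      (p * ∫ w, f w ∂μ + (1 - p) * ∫ w, f w ∂ν)| ≤ ε / 4 := by
    have h1 := hint μ inferInstance
    have h2 := hint ν inferInstance
    have e : (p * ∫ w, g w ∂μ + (1 - p) * ∫ w, g w ∂ν) -
        (p * ∫ w, f w ∂μ + (1 - p) * ∫ w, f w ∂ν)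
        = p * ((∫ w, g w ∂μ) - ∫ w, f w ∂μ) + (1 - p) * ((∫ w, g w ∂ν) - ∫ w, f w ∂ν) := by
      ring
    rw [e]
    calc |p * ((∫ w, g w ∂μ) - ∫ w, f w ∂μ) + (1 - p) * ((∫ w, g w ∂ν) - ∫ w, f w ∂ν)|
        ≤ |p * ((∫ w, g w ∂μ) - ∫ w, f w ∂μ)| + |(1 - p) * ((∫ w, g w ∂ν) - ∫ w, f w ∂ν)| :=
          abs_add_le _ _
      _ = p * |(∫ w, g w ∂μ) - ∫ w, f w ∂μ| + (1 - p) * |(∫ w, g w ∂ν) - ∫ w, f w ∂ν| := by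
          rw [abs_mul, abs_mul, abs_of_nonneg hp0, abs_of_nonneg (by linarith : (0:ℝ) ≤ 1 - p)]
      _ ≤ p * (ε / 4) + (1 - p) * (ε / 4) := by
          apply add_le_add
          · exact mul_le_mul_of_nonneg_left (by rw [abs_sub_comm]; exact h1) hp0
          · exact mul_le_mul_of_nonneg_left (by rw [abs_sub_comm]; exact h2)
              (by linarith : (0:ℝ) ≤ 1 - p)
      _ = ε / 4 := by ring
  refine ⟨max N 1, fun n hn => ?_⟩
  have hn1 : 1 ≤ n := le_trans (le_max_right _ _) hn
  have hnN : N ≤ n := le_trans (le_max_left _ _) hn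
  have hnpos : (0:ℝ) < (n:ℝ) := by exact_mod_cast hn1
  have hd2 := hN n hnN
  rw [Real.dist_eq] at hd2 ⊢
  have hd1 : |(1 / (n : ℝ) * ∑ k ∈ Finset.range n, f (ξ k ω)) -
      1 / (n : ℝ) * ∑ k ∈ Finset.range n, g (ξ k ω)| ≤ ε / 4 := by
    rw [← mul_sub, ← Finset.sum_sub_distrib, abs_mul,
      abs_of_nonneg (by positivity : (0:ℝ) ≤ 1 / (n:ℝ))]
    calc 1 / (n:ℝ) * |∑ k ∈ Finset.range n, (f (ξ k ω) - g (ξ k ω))|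
        ≤ 1 / (n:ℝ) * ∑ k ∈ Finset.range n, |f (ξ k ω) - g (ξ k ω)| :=
          mul_le_mul_of_nonneg_left (Finset.abs_sum_le_sum_abs _ _) (by positivity)
      _ ≤ 1 / (n:ℝ) * ∑ _k ∈ Finset.range n, (ε / 4) :=
          mul_le_mul_of_nonneg_left (Finset.sum_le_sum fun k _ => hgf _) (by positivity)
      _ = ε / 4 := by
          rw [Finset.sum_const, Finset.card_range, nsmul_eq_mul]
          field_simp
  calc |(1 / (n : ℝ) * ∑ k ∈ Finset.range n, f (ξ k ω)) -
      (p * ∫ w, f w ∂μ + (1 - p) * ∫ w, f w ∂ν)|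
      ≤ |(1 / (n : ℝ) * ∑ k ∈ Finset.range n, f (ξ k ω)) -
          1 / (n : ℝ) * ∑ k ∈ Finset.range n, g (ξ k ω)| +
        |(1 / (n : ℝ) * ∑ k ∈ Finset.range n, g (ξ k ω)) -
          (p * ∫ w, g w ∂μ + (1 - p) * ∫ w, g w ∂ν)| +
        |(p * ∫ w, g w ∂μ + (1 - p) * ∫ w, g w ∂ν) -
          (p * ∫ w, f w ∂μ + (1 - p) * ∫ w, f w ∂ν)| := by
        have h1 := abs_sub_le (1 / (n : ℝ) * ∑ k ∈ Finset.range n, f (ξ k ω))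
          (1 / (n : ℝ) * ∑ k ∈ Finset.range n, g (ξ k ω))
          (p * ∫ w, f w ∂μ + (1 - p) * ∫ w, f w ∂ν)
        have h2 := abs_sub_le (1 / (n : ℝ) * ∑ k ∈ Finset.range n, g (ξ k ω))
          (p * ∫ w, g w ∂μ + (1 - p) * ∫ w, g w ∂ν)
          (p * ∫ w, f w ∂μ + (1 - p) * ∫ w, f w ∂ν)
        linarith
    _ < ε := by
        have := hd1; have := hd2; have := hd3; linarith
end
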